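/- arXiv:1210.0265 — 11 statements merged into one kernel-verified Lean document; each statement's English description precedes it below -/
import Mathlib

section
/- Let F̂₁ and F̂₂ be unit vectors in ℝ² that are neither parallel nor orthogonal, i.e. F̂₁ ≠ ±F̂₂ and F̂₁·F̂₂ ≠ 0. Then the family {q_{F̂₁}, q_{F̂₂}} is elliptic: the only ξ ∈ ℝ² with q_{F̂₁}(ξ) = 0 and q_{F̂₂}(ξ) = 0 is ξ = 0. -/
/-- The quadratic form `q_F(ξ) = 2 (F·ξ)² − |ξ|²` associated to a (unit) vector `F`. -/
noncomputable def qForm {n : ℕ} (F ξ : EuclideanSpace ℝ (Fin n)) : ℝ :=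
  2 * (inner ℝ F ξ : ℝ) ^ 2 - ‖ξ‖ ^ 2

/-- If `F̂₁, F̂₂` are unit vectors in `ℝ²` that are neither parallel nor orthogonal, then
the family `{q_{F̂₁}, q_{F̂₂}}` is elliptic: the only common zero of the two quadratic
forms is `ξ = 0`. -/
theorem stmt0 (F₁ F₂ : EuclideanSpace ℝ (Fin 2))
    (hF₁ : ‖F₁‖ = 1) (hF₂ : ‖F₂‖ = 1)
    (hpar : F₁ ≠ F₂) (hpar' : F₁ ≠ -F₂)
    (horth : (inner ℝ F₁ F₂ : ℝ) ≠ 0) :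
    ∀ ξ : EuclideanSpace ℝ (Fin 2), qForm F₁ ξ = 0 → qForm F₂ ξ = 0 → ξ = 0 := by
  have hi : ∀ v w : EuclideanSpace ℝ (Fin 2),
      (inner ℝ v w : ℝ) = v 0 * w 0 + v 1 * w 1 := by
    intro v w
    simp [PiLp.inner_apply, Fin.sum_univ_two, mul_comm]
  have hn : ∀ v : EuclideanSpace ℝ (Fin 2), ‖v‖ ^ 2 = v 0 ^ 2 + v 1 ^ 2 := by
    intro v
    rw [← real_inner_self_eq_norm_sq, hi]
    ring
  obtain ⟨a, ha⟩ : ∃ a, F₁ 0 = a := ⟨_, rfl⟩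
  obtain ⟨b, hb⟩ : ∃ b, F₁ 1 = b := ⟨_, rfl⟩
  obtain ⟨c, hc⟩ : ∃ c, F₂ 0 = c := ⟨_, rfl⟩
  obtain ⟨d, hd⟩ : ∃ d, F₂ 1 = d := ⟨_, rfl⟩
  have h1 : a ^ 2 + b ^ 2 = 1 := by
    have := hn F₁; rw [hF₁, ha, hb] at this; linarith [this]
  have h2 : c ^ 2 + d ^ 2 = 1 := by
    have := hn F₂; rw [hF₂, hc, hd] at this; linarith [this]
  have hdot : a * c + b * d ≠ 0 := by
    rw [hi, ha, hb, hc, hd] at horth; exact horth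
  -- cross term nonzero
  have hcross : a * d - b * c ≠ 0 := by
    intro h
    have hac : a = (a * c + b * d) * c := by linear_combination d * h - a * h2
    have hbd : b = (a * c + b * d) * d := by linear_combination -(c * h) - b * h2
    have ht : ((a * c + b * d) - 1) * ((a * c + b * d) + 1) = 0 := by
      linear_combination (c ^ 2 + d ^ 2) * h1 + h2 - (a * d - b * c) * h
    rcases mul_eq_zero.mp ht with ht1 | ht2
    · apply hpar
      ext i
      fin_cases i
      · show F₁ 0 = F₂ 0
        rw [ha, hc, hac]; nlinarith [ht1]
      · show F₁ 1 = F₂ 1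
        rw [hb, hd, hbd]; nlinarith [ht1]
    · apply hpar'
      ext i
      fin_cases i
      · show F₁ 0 = -F₂ 0
        rw [ha, hc, hac]; nlinarith [ht2]
      · show F₁ 1 = -F₂ 1
        rw [hb, hd, hbd]; nlinarith [ht2]
  intro ξ hq1 hq2
  obtain ⟨x, hx⟩ : ∃ x, ξ 0 = x := ⟨_, rfl⟩
  obtain ⟨y, hy⟩ : ∃ y, ξ 1 = y := ⟨_, rfl⟩
  rw [qForm, hi, hn, ha, hb, hx, hy] at hq1
  rw [qForm, hi, hn, hc, hd, hx, hy] at hq2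
  have e1 : (a ^ 2 - b ^ 2) * (x ^ 2 - y ^ 2) + 4 * (a * b) * (x * y) = 0 := by
    linear_combination hq1 - (x ^ 2 + y ^ 2) * h1
  have e2 : (c ^ 2 - d ^ 2) * (x ^ 2 - y ^ 2) + 4 * (c * d) * (x * y) = 0 := by
    linear_combination hq2 - (x ^ 2 + y ^ 2) * h2
  have hdet : (a * c + b * d) * (a * d - b * c) ≠ 0 := mul_ne_zero hdot hcross
  have hu : x ^ 2 - y ^ 2 = 0 := by
    have h0 : (a * c + b * d) * (a * d - b * c) * (x ^ 2 - y ^ 2) = 0 := by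
      linear_combination (c * d) * e1 - (a * b) * e2
    exact (mul_eq_zero.mp h0).resolve_left hdet
  have hv : x * y = 0 := by
    have h0 : (a * c + b * d) * (a * d - b * c) * (x * y) = 0 := by
      linear_combination ((a ^ 2 - b ^ 2) * e2 - (c ^ 2 - d ^ 2) * e1) / 4
    exact (mul_eq_zero.mp h0).resolve_left hdet
  have hx0 : x = 0 ∧ y = 0 := by
    rcases mul_eq_zero.mp hv with h | h
    · refine ⟨h, ?_⟩
      have : y ^ 2 = 0 := by rw [h] at hu; linarith [hu]
      exact pow_eq_zero_iff (n := 2) (by norm_num) |>.mp this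
    · refine ⟨?_, h⟩
      have : x ^ 2 = 0 := by rw [h] at hu; linarith [hu]
      exact pow_eq_zero_iff (n := 2) (by norm_num) |>.mp this
  ext i
  fin_cases i
  · show ξ 0 = 0; rw [hx, hx0.1]
  · show ξ 1 = 0; rw [hy, hx0.2]
end

section
/- Let n ≥ 2 and let F̂₁ and F̂₂ be unit vectors in ℝⁿ with F̂₁ ≠ ±F̂₂. Let α, β be real numbers with αβ ≠ 0 such that F̂₃ = αF̂₁ + βF̂₂ is a unit vector. Then the family {q_{F̂₁}, q_{F̂₂}, q_{F̂₃}} is elliptic: the only ξ ∈ ℝⁿ with q_{F̂_j}(ξ) = 0 for j = 1, 2, 3 is ξ = 0. -/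
/-- Let `n ≥ 2` and let `F̂₁ ≠ ±F̂₂` be unit vectors in `ℝⁿ`.  If `F̂₃ = αF̂₁ + βF̂₂` is a
unit vector with `αβ ≠ 0`, then `{q_{F̂₁}, q_{F̂₂}, q_{F̂₃}}` is an elliptic family: the
only common zero of the three quadratic forms is `ξ = 0`. -/
theorem stmt1 {n : ℕ} (hn : 2 ≤ n) (F₁ F₂ : EuclideanSpace ℝ (Fin n))
    (hF₁ : ‖F₁‖ = 1) (hF₂ : ‖F₂‖ = 1)
    (hpar : F₁ ≠ F₂) (hpar' : F₁ ≠ -F₂)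
    (α β : ℝ) (hαβ : α * β ≠ 0)
    (F₃ : EuclideanSpace ℝ (Fin n)) (hF₃def : F₃ = α • F₁ + β • F₂) (hF₃ : ‖F₃‖ = 1) :
    ∀ ξ : EuclideanSpace ℝ (Fin n),
      qForm F₁ ξ = 0 → qForm F₂ ξ = 0 → qForm F₃ ξ = 0 → ξ = 0 := by
  intro ξ h1 h2 h3
  by_contra hξ
  unfold qForm at h1 h2 h3
  set a : ℝ := inner ℝ F₁ ξ with ha
  set b : ℝ := inner ℝ F₂ ξ with hb
  set t : ℝ := inner ℝ F₁ F₂ with ht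
  have hξn : (0:ℝ) < ‖ξ‖ := norm_pos_iff.mpr hξ
  have hs : (0:ℝ) < ‖ξ‖ ^ 2 := by positivity
  have hc : (inner ℝ F₃ ξ : ℝ) = α * a + β * b := by
    rw [hF₃def, inner_add_left, real_inner_smul_left, real_inner_smul_left]
  rw [hc] at h3
  -- norm of F₃
  have hF₃sq : α ^ 2 + β ^ 2 + 2 * α * β * t = 1 := by
    have h33 : (inner ℝ F₃ F₃ : ℝ) = 1 := by
      rw [real_inner_self_eq_norm_sq, hF₃]; norm_num
    rw [hF₃def] at h33
    have h11 : (inner ℝ F₁ F₁ : ℝ) = 1 := by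
      rw [real_inner_self_eq_norm_sq, hF₁]; norm_num
    have h22 : (inner ℝ F₂ F₂ : ℝ) = 1 := by
      rw [real_inner_self_eq_norm_sq, hF₂]; norm_num
    have h21 : (inner ℝ F₂ F₁ : ℝ) = t := by rw [real_inner_comm]
    simp only [inner_add_left, inner_add_right, real_inner_smul_left,
      real_inner_smul_right, h11, h22, h21, ← ht] at h33
    linarith [h33]
  have ha0 : a ≠ 0 := by
    intro h; rw [h] at h1; nlinarith
  have h1' : 2 * a ^ 2 = ‖ξ‖ ^ 2 := by linarith
  -- b = a or b = -a
  have hab : b = a ∨ b = -a := by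
    have hz : (b - a) * (b + a) = 0 := by nlinarith
    rcases mul_eq_zero.mp hz with h | h
    · left; linarith
    · right; linarith
  have key : ∀ ε : ℝ, ε ^ 2 = 1 → b = ε * a → t ≠ ε → False := by
    intro ε hε2 hbe htε
    have h3' : 2 * ((α + ε * β) * a) ^ 2 = ‖ξ‖ ^ 2 := by
      rw [hbe] at h3; nlinarith
    have hz : ((α + ε * β) ^ 2 - 1) * a ^ 2 = 0 := by linear_combination (h3' - h1') / 2
    have hsq : (α + ε * β) ^ 2 = 1 := by
      rcases mul_eq_zero.mp hz with h | h
      · linarith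
      · exact absurd h (pow_ne_zero 2 ha0)
    have hzero : 2 * α * β * (t - ε) = 0 := by
      linear_combination hF₃sq - hsq + β ^ 2 * hε2
    have h2αβ : (2:ℝ) * α * β ≠ 0 := fun h => hαβ (by linarith)
    have := (mul_eq_zero.mp hzero).resolve_left h2αβ
    exact htε (by linarith)
  have hF12 : t = 1 → False := fun h1t =>
    hpar ((inner_eq_one_iff_of_norm_eq_one hF₁ hF₂).mp (ht.symm.trans h1t))
  have hF12' : t = -1 → False := by
    intro h1t
    apply hpar'
    have hn2 : ‖-F₂‖ = 1 := by rw [norm_neg]; exact hF₂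
    have hi : (inner ℝ F₁ (-F₂) : ℝ) = 1 := by
      rw [inner_neg_right, ← ht, h1t]; norm_num
    exact (inner_eq_one_iff_of_norm_eq_one hF₁ hn2).mp hi
  rcases hab with h | h
  · exact key 1 (by norm_num) (by rw [h]; ring) hF12
  · exact key (-1) (by norm_num) (by rw [h]; ring) hF12'
end

section
/- Let n ≥ 3 and let F̂₁ and F̂₂ be any unit vectors in ℝⁿ. Then the family {q_{F̂₁}, q_{F̂₂}} is never elliptic: there exists a nonzero ξ ∈ ℝⁿ with q_{F̂₁}(ξ) = 0 and q_{F̂₂}(ξ) = 0. -/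
open scoped RealInnerProductSpace
open FiniteDimensional Module

/-- In dimension at least 3 there is a unit vector orthogonal to two given vectors. -/
lemma exists_unit_orth {n : ℕ} (hn : 3 ≤ n) (F₁ F₂ : EuclideanSpace ℝ (Fin n)) :
    ∃ w : EuclideanSpace ℝ (Fin n), ‖w‖ = 1 ∧ ⟪F₁, w⟫ = 0 ∧ ⟪F₂, w⟫ = 0 := by
  classical
  set K : Submodule ℝ (EuclideanSpace ℝ (Fin n)) := Submodule.span ℝ {F₁, F₂} with hK
  have hcard : finrank ℝ K ≤ 2 := by
    have h2 : ({F₁, F₂} : Set _) = ↑({F₁, F₂} : Finset _) := by simp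
    rw [hK, h2]
    exact (finrank_span_finset_le_card _).trans ((Finset.card_insert_le _ _).trans (by simp))
  have hsum : finrank ℝ K + finrank ℝ Kᗮ = n := by
    have := K.finrank_add_finrank_orthogonal
    simpa using this
  have hpos : Kᗮ ≠ ⊥ := by
    intro h
    rw [h, finrank_bot] at hsum
    omega
  obtain ⟨w, hwK, hw0⟩ := Submodule.exists_mem_ne_zero_of_ne_bot hpos
  refine ⟨‖w‖⁻¹ • w, ?_, ?_, ?_⟩
  · simp [norm_smul, hw0]
  · rw [inner_smul_right]
    have := hwK F₁ (Submodule.subset_span (by simp))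
    simp [this]
  · rw [inner_smul_right]
    have := hwK F₂ (Submodule.subset_span (by simp))
    simp [this]

/-- In dimension `n ≥ 3`, a family of two quadratic forms `{q_{F̂₁}, q_{F̂₂}}` is never
elliptic: there is a nonzero `ξ` in the intersection of the two null cones. -/
theorem stmt2 {n : ℕ} (hn : 3 ≤ n) (F₁ F₂ : EuclideanSpace ℝ (Fin n))
    (hF₁ : ‖F₁‖ = 1) (hF₂ : ‖F₂‖ = 1) :
    ∃ ξ : EuclideanSpace ℝ (Fin n), ξ ≠ 0 ∧ qForm F₁ ξ = 0 ∧ qForm F₂ ξ = 0 := by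
  obtain ⟨w, hw, hw1, hw2⟩ := exists_unit_orth hn F₁ F₂
  set c : ℝ := ⟪F₁, F₂⟫ with hc
  set s : ℝ := if 0 ≤ c then 1 else -1 with hs
  set t : ℝ := |c| with ht
  have hst : s * c = t := by
    rcases le_or_gt 0 c with h | h
    · simp [hs, ht, h, abs_of_nonneg h]
    · simp [hs, ht, not_le.2 h, abs_of_neg h]
  have hs2 : s * s = 1 := by
    rcases le_or_gt 0 c with h | h <;> simp [hs, h, not_le.2]
  have htnn : 0 ≤ t := abs_nonneg c
  set β : ℝ := Real.sqrt (2 * t * (1 + t)) with hβ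
  have hβ2 : β * β = 2 * t * (1 + t) := Real.mul_self_sqrt (by positivity)
  set ξ : EuclideanSpace ℝ (Fin n) := F₁ + s • F₂ + β • w with hξ
  have hF1n : ⟪F₁, F₁⟫ = 1 := by
    rw [real_inner_self_eq_norm_sq, hF₁]; norm_num
  have hF2n : ⟪F₂, F₂⟫ = 1 := by
    rw [real_inner_self_eq_norm_sq, hF₂]; norm_num
  have hwn : ⟪w, w⟫ = 1 := by
    rw [real_inner_self_eq_norm_sq, hw]; norm_num
  have hc' : ⟪F₂, F₁⟫ = c := by rw [hc, real_inner_comm]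
  have hw1' : ⟪w, F₁⟫ = 0 := by rw [← hw1, real_inner_comm]
  have hw2' : ⟪w, F₂⟫ = 0 := by rw [← hw2, real_inner_comm]
  have i1 : ⟪F₁, ξ⟫ = 1 + t := by
    simp only [hξ, inner_add_right, real_inner_smul_right]
    rw [hF1n, ← hc, hw1, hst]; ring
  have i2 : ⟪F₂, ξ⟫ = s * (1 + t) := by
    have hcst : c = s * t := by
      calc c = (s * s) * c := by rw [hs2]; ring
        _ = s * t := by rw [mul_assoc, hst]
    simp only [hξ, inner_add_right, real_inner_smul_right]
    rw [hF2n, hc', hw2, hcst]; ring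
  have hnorm : ‖ξ‖ ^ 2 = 2 * (1 + t) ^ 2 := by
    rw [← real_inner_self_eq_norm_sq]
    simp only [hξ, inner_add_right, inner_add_left, real_inner_smul_right,
      real_inner_smul_left]
    rw [hF1n, hF2n, hwn, ← hc, hc', hw1, hw2, hw1', hw2']
    nlinarith [hst, hs2, hβ2]
  refine ⟨ξ, ?_, ?_, ?_⟩
  · intro h
    rw [h, inner_zero_right] at i1
    linarith
  · rw [qForm, i1, hnorm]; ring
  · rw [qForm, i2, hnorm]
    linear_combination 2 * (1 + t) ^ 2 * hs2
end

section
/- Let n ≥ 2 and let F₁ and F₂ be linearly independent (in particular nonzero) vectors in ℝⁿ, and set F₃ = F₁ + F₂ (which is nonzero). Writing F̂_j = F_j/|F_j| for the normalized vectors, the family {q_{F̂₁}, q_{F̂₂}, q_{F̂₃}} is elliptic: the only ξ ∈ ℝⁿ with q_{F̂_j}(ξ) = 0 for j = 1, 2, 3 is ξ = 0. -/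
/-- Let `n ≥ 2`, let `F₁, F₂` be linearly independent vectors in `ℝⁿ` and `F₃ = F₁ + F₂`.
With `F̂ⱼ = Fⱼ/|Fⱼ|` the normalized vectors, the family `{q_{F̂₁}, q_{F̂₂}, q_{F̂₃}}` is
elliptic: the only common zero of the three quadratic forms is `ξ = 0`. -/
theorem stmt3 {n : ℕ} (hn : 2 ≤ n) (F₁ F₂ : EuclideanSpace ℝ (Fin n))
    (hind : LinearIndependent ℝ ![F₁, F₂]) :
    ∀ ξ : EuclideanSpace ℝ (Fin n),
      qForm (‖F₁‖⁻¹ • F₁) ξ = 0 → qForm (‖F₂‖⁻¹ • F₂) ξ = 0 →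
      qForm (‖F₁ + F₂‖⁻¹ • (F₁ + F₂)) ξ = 0 → ξ = 0 := by
  intro ξ h1 h2 h3
  by_contra hξ
  obtain ⟨hF2, hnot⟩ := linearIndependent_fin2.mp hind
  simp only [Matrix.cons_val_one, Matrix.head_cons, Matrix.cons_val_zero] at hF2 hnot
  have hF1 : F₁ ≠ 0 := fun h => hnot 0 (by simp [h])
  have hF3 : F₁ + F₂ ≠ 0 := fun h => by
    have h' : F₁ = -F₂ := eq_neg_of_add_eq_zero_left h
    exact hnot (-1) (by rw [neg_one_smul, ← h'])
  have hn1 : ‖F₁‖ ≠ 0 := norm_ne_zero_iff.mpr hF1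
  have hn2 : ‖F₂‖ ≠ 0 := norm_ne_zero_iff.mpr hF2
  have hn3 : ‖F₁ + F₂‖ ≠ 0 := norm_ne_zero_iff.mpr hF3
  have hN : ‖ξ‖ ≠ 0 := norm_ne_zero_iff.mpr hξ
  simp only [qForm, real_inner_smul_left] at h1 h2 h3
  have hab : (inner ℝ (F₁ + F₂) ξ : ℝ) = inner ℝ F₁ ξ + inner ℝ F₂ ξ := inner_add_left F₁ F₂ ξ
  rw [hab] at h3
  set a : ℝ := inner ℝ F₁ ξ with ha
  set b : ℝ := inner ℝ F₂ ξ with hb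
  set p : ℝ := inner ℝ F₁ F₂ with hp
  set N : ℝ := ‖ξ‖ ^ 2 with hNdef
  have hi1 : ‖F₁‖⁻¹ * ‖F₁‖ = 1 := inv_mul_cancel₀ hn1
  have hi2 : ‖F₂‖⁻¹ * ‖F₂‖ = 1 := inv_mul_cancel₀ hn2
  have hi3 : ‖F₁ + F₂‖⁻¹ * ‖F₁ + F₂‖ = 1 := inv_mul_cancel₀ hn3
  have e1 : 2 * a ^ 2 = ‖F₁‖ ^ 2 * N := by
    linear_combination ‖F₁‖ ^ 2 * h1 - 2 * a ^ 2 * (‖F₁‖⁻¹ * ‖F₁‖ + 1) * hi1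
  have e2 : 2 * b ^ 2 = ‖F₂‖ ^ 2 * N := by
    linear_combination ‖F₂‖ ^ 2 * h2 - 2 * b ^ 2 * (‖F₂‖⁻¹ * ‖F₂‖ + 1) * hi2
  have e3 : 2 * (a + b) ^ 2 = ‖F₁ + F₂‖ ^ 2 * N := by
    linear_combination ‖F₁ + F₂‖ ^ 2 * h3 -
      2 * (a + b) ^ 2 * (‖F₁ + F₂‖⁻¹ * ‖F₁ + F₂‖ + 1) * hi3
  have hexp : ‖F₁ + F₂‖ ^ 2 = ‖F₁‖ ^ 2 + 2 * p + ‖F₂‖ ^ 2 := by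
    rw [hp]; exact norm_add_sq_real F₁ F₂
  rw [hexp] at e3
  have key : 2 * a * b = p * N := by linear_combination (e3 - e1 - e2) / 2
  have hNne : N ≠ 0 := pow_ne_zero 2 hN
  have h6 : p ^ 2 * N ^ 2 = (‖F₁‖ * ‖F₂‖) ^ 2 * N ^ 2 := by
    linear_combination (-(2 * a * b + p * N)) * key + 2 * b ^ 2 * e1 + ‖F₁‖ ^ 2 * N * e2
  have hsq : p ^ 2 = (‖F₁‖ * ‖F₂‖) ^ 2 := mul_right_cancel₀ (pow_ne_zero 2 hNne) h6
  have habs : ‖(inner ℝ F₁ F₂ : ℝ)‖ = ‖F₁‖ * ‖F₂‖ := by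
    rw [Real.norm_eq_abs, ← hp, ← Real.sqrt_sq_eq_abs, hsq,
      Real.sqrt_sq (by positivity)]
  obtain ⟨r, hr, hyx⟩ := (norm_inner_eq_norm_iff (𝕜 := ℝ) hF1 hF2).mp habs
  exact hnot r⁻¹ (by rw [hyx, smul_smul, inv_mul_cancel₀ hr, one_smul])
end

section
/- Let γ > 0 be a real number and let F₁, …, F_J be nonzero vectors in ℝⁿ, with normalizations F̂_j = F_j/|F_j|. For ξ ∈ ℝⁿ let 𝔭(ξ) be the 2J × (J+1) complex matrix whose rows are indexed in pairs by j = 1, …, J as follows: row (2j−1) has first entry |F_j|², entry 2γ i (F_j·ξ) in column j+1, and zeros in all other columns; row 2j has first entry i (F_j·ξ), entry −γ|ξ|² in column j+1, and zeros in all other columns. Then 𝔭(ξ) has trivial kernel (equivalently, rank J+1) for every nonzero ξ ∈ ℝⁿ if and only if the family {q_{F̂₁}, …, q_{F̂_J}} is elliptic. -/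
/-- The principal symbol `𝔭(ξ)` of the linearized power density system: a `2J × (J+1)`
complex matrix whose rows come in pairs indexed by `j : Fin J`; row `(j, 0)` (the row
`2j−1`) has first entry `|F_j|²`, entry `2γ i (F_j·ξ)` in column `j+1` and zeros
elsewhere; row `(j, 1)` (the row `2j`) has first entry `i (F_j·ξ)`, entry `−γ|ξ|²` in
column `j+1` and zeros elsewhere. -/
noncomputable def powerDensitySymbol {n J : ℕ} (γ : ℝ) (F : Fin J → EuclideanSpace ℝ (Fin n))
    (ξ : EuclideanSpace ℝ (Fin n)) : Matrix (Fin J × Fin 2) (Fin (J + 1)) ℂ :=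
  fun p c =>
    if c = 0 then
      (if p.2 = 0 then ((‖F p.1‖ ^ 2 : ℝ) : ℂ)
       else Complex.I * ((inner ℝ (F p.1) ξ : ℝ) : ℂ))
    else if c = Fin.succ p.1 then
      (if p.2 = 0 then 2 * (γ : ℂ) * Complex.I * ((inner ℝ (F p.1) ξ : ℝ) : ℂ)
       else -(γ : ℂ) * ((‖ξ‖ ^ 2 : ℝ) : ℂ))
    else 0

lemma symbol_mulVec {n J : ℕ} (γ : ℝ) (F : Fin J → EuclideanSpace ℝ (Fin n))
    (ξ : EuclideanSpace ℝ (Fin n)) (v : Fin (J+1) → ℂ) (j : Fin J) (k : Fin 2) :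
    (powerDensitySymbol γ F ξ).mulVec v (j, k) =
      (if k = 0 then ((‖F j‖ ^ 2 : ℝ) : ℂ) else Complex.I * ((inner ℝ (F j) ξ : ℝ) : ℂ)) * v 0 +
      (if k = 0 then 2 * (γ : ℂ) * Complex.I * ((inner ℝ (F j) ξ : ℝ) : ℂ)
        else -(γ : ℂ) * ((‖ξ‖ ^ 2 : ℝ) : ℂ)) * v j.succ := by
  simp only [Matrix.mulVec, dotProduct, powerDensitySymbol]
  rw [Fin.sum_univ_succ]
  simp [Fin.succ_ne_zero, Fin.succ_inj, ite_mul, zero_mul, Finset.sum_ite_eq']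

lemma qzero_iff {n : ℕ} (G ξ : EuclideanSpace ℝ (Fin n)) (hG : G ≠ 0) :
    qForm (‖G‖⁻¹ • G) ξ = 0 ↔ 2 * (inner ℝ G ξ : ℝ) ^ 2 = ‖G‖ ^ 2 * ‖ξ‖ ^ 2 := by
  have h : ‖G‖ ≠ 0 := norm_ne_zero_iff.mpr hG
  have h2 : (‖G‖ : ℝ) ^ 2 ≠ 0 := pow_ne_zero _ h
  rw [qForm, real_inner_smul_left, sub_eq_zero, mul_pow, inv_pow]
  obtain ⟨a, ha⟩ : ∃ a : ℝ, (inner ℝ G ξ : ℝ) = a := ⟨_, rfl⟩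
  rw [ha]
  constructor
  · intro h'
    have := congrArg (· * ‖G‖ ^ 2) h'
    field_simp at this
    linear_combination this
  · intro h'
    field_simp
    linear_combination h'

lemma aux1 (B A S g : ℂ) (hg : g ≠ 0) (hS : S ≠ 0) (h : 2 * A ^ 2 = B * S) :
    B * 1 + (2 * g * Complex.I * A) * (Complex.I * A / (g * S)) = 0 := by
  have hgS : g * S ≠ 0 := mul_ne_zero hg hS
  have expand : (g * S) * (B * 1 + (2 * g * Complex.I * A) * (Complex.I * A / (g * S))) =
      g * (B * S - 2 * A ^ 2) := by
    field_simp
    linear_combination 2 * A ^ 2 * Complex.I_sq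
  have hz : (g * S) * (B * 1 + (2 * g * Complex.I * A) * (Complex.I * A / (g * S))) = 0 := by
    rw [expand, ← h]; ring
  exact (mul_eq_zero.mp hz).resolve_left hgS

lemma aux2 (A S g : ℂ) (hg : g ≠ 0) (hS : S ≠ 0) :
    Complex.I * A * 1 + (-g * S) * (Complex.I * A / (g * S)) = 0 := by
  field_simp
  ring

lemma aux3 (B A S g v0 v1 : ℂ) (hg : g ≠ 0) (h0 : v0 ≠ 0)
    (e0 : B * v0 + (2 * g * Complex.I * A) * v1 = 0)
    (e1 : Complex.I * A * v0 + (-g * S) * v1 = 0) :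
    2 * A ^ 2 = B * S := by
  have key : g * v0 * (B * S - 2 * A ^ 2) = 0 := by
    linear_combination S * g * e0 + 2 * g * Complex.I * A * e1 - 2 * g * A ^ 2 * v0 * Complex.I_sq
  rcases mul_eq_zero.mp key with h' | h'
  · exact absurd h' (mul_ne_zero hg h0)
  · linear_combination -h'

/-- The principal symbol `𝔭(ξ)` of the linearized power density system has trivial kernel
for every nonzero `ξ` if and only if the family of quadratic forms `{q_{F̂_j}}` is
elliptic. -/
theorem stmt4 {n J : ℕ} (γ : ℝ) (hγ : 0 < γ)
    (F : Fin J → EuclideanSpace ℝ (Fin n)) (hF : ∀ j, F j ≠ 0) :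
    (∀ ξ : EuclideanSpace ℝ (Fin n), ξ ≠ 0 →
        ∀ v : Fin (J + 1) → ℂ, (powerDensitySymbol γ F ξ).mulVec v = 0 → v = 0) ↔
      (∀ ξ : EuclideanSpace ℝ (Fin n), (∀ j, qForm (‖F j‖⁻¹ • F j) ξ = 0) → ξ = 0) := by
  have hγ' : (γ : ℂ) ≠ 0 := Complex.ofReal_ne_zero.mpr hγ.ne'
  constructor
  · intro h ξ hq
    by_contra hξ
    have hs : (‖ξ‖ ^ 2 : ℝ) ≠ 0 := pow_ne_zero _ (norm_ne_zero_iff.mpr hξ)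
    have hs' : ((‖ξ‖ ^ 2 : ℝ) : ℂ) ≠ 0 := Complex.ofReal_ne_zero.mpr hs
    set v : Fin (J+1) → ℂ := Fin.cons 1
      (fun j => Complex.I * ((inner ℝ (F j) ξ : ℝ) : ℂ) / ((γ : ℂ) * ((‖ξ‖ ^ 2 : ℝ) : ℂ))) with hvdef
    have hmv : (powerDensitySymbol γ F ξ).mulVec v = 0 := by
      funext p
      obtain ⟨j, k⟩ := p
      have hq2 : 2 * (inner ℝ (F j) ξ : ℝ) ^ 2 = ‖F j‖ ^ 2 * ‖ξ‖ ^ 2 :=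
        (qzero_iff (F j) ξ (hF j)).mp (hq j)
      have hq2' : 2 * ((inner ℝ (F j) ξ : ℝ) : ℂ) ^ 2 = ((‖F j‖ ^ 2 : ℝ) : ℂ) * ((‖ξ‖ ^ 2 : ℝ) : ℂ) := by
        rw [← Complex.ofReal_mul, ← hq2]
        push_cast
        ring
      rw [symbol_mulVec]
      simp only [hvdef, Fin.cons_zero, Fin.cons_succ, Pi.zero_apply]
      fin_cases k
      · simp only [reduceIte]
        exact aux1 _ _ _ _ hγ' hs' hq2'
      · simp only [reduceIte]
        exact aux2 ((inner ℝ (F j) ξ : ℝ) : ℂ) _ _ hγ' hs'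
    have hv0 := congrFun (h ξ hξ v hmv) 0
    simp [hvdef] at hv0
  · intro hell ξ hξ v hv
    have hs : (‖ξ‖ ^ 2 : ℝ) ≠ 0 := pow_ne_zero _ (norm_ne_zero_iff.mpr hξ)
    have hs' : ((‖ξ‖ ^ 2 : ℝ) : ℂ) ≠ 0 := Complex.ofReal_ne_zero.mpr hs
    have hv0 : v 0 = 0 := by
      by_contra h0
      refine hξ (hell ξ fun j => ?_)
      have e0 := congrFun hv (j, 0)
      have e1 := congrFun hv (j, 1)
      rw [symbol_mulVec] at e0 e1
      simp only [reduceIte, Pi.zero_apply] at e0 e1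
      rw [qzero_iff (F j) ξ (hF j)]
      have key : 2 * ((inner ℝ (F j) ξ : ℝ) : ℂ) ^ 2 =
          ((‖F j‖ ^ 2 : ℝ) : ℂ) * ((‖ξ‖ ^ 2 : ℝ) : ℂ) :=
        aux3 _ _ _ _ (v 0) (v j.succ) hγ' h0 e0 e1
      have : ((2 * (inner ℝ (F j) ξ : ℝ) ^ 2 : ℝ) : ℂ) = ((‖F j‖ ^ 2 * ‖ξ‖ ^ 2 : ℝ) : ℂ) := by
        push_cast at key ⊢
        linear_combination key
      exact_mod_cast this
    funext i
    refine Fin.cases hv0 (fun j => ?_) i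
    have e1 := congrFun hv (j, 1)
    rw [symbol_mulVec] at e1
    simp only [reduceIte, Pi.zero_apply, hv0, mul_zero, zero_add] at e1
    have hne : -(γ : ℂ) * ((‖ξ‖ ^ 2 : ℝ) : ℂ) ≠ 0 :=
      mul_ne_zero (neg_ne_zero.mpr hγ') hs'
    simpa using (mul_eq_zero.mp e1).resolve_left hne
end

section
/- Let F₁, …, F_J be nonzero vectors in ℝⁿ whose normalizations F̂_j = F_j/|F_j| give an elliptic family {q_{F̂₁}, …, q_{F̂_J}}. Let ξ ∈ ℝⁿ be nonzero and let a₁, …, a_J be complex numbers satisfying q_{F̂_j}(ξ) a_j = 0 for every j, and |F_k|² (F_j·ξ) a_j = |F_j|² (F_k·ξ) a_k for every pair j, k. Then a_j = 0 for all j. -/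
/-- Injectivity at nonzero frequencies of the principal symbol of the redundant system
obtained after elimination of `δγ`: if `{q_{F̂_j}}` is an elliptic family, `ξ ≠ 0`, and
complex numbers `a_j` satisfy `q_{F̂_j}(ξ) a_j = 0` for all `j` together with
`|F_k|² (F_j·ξ) a_j = |F_j|² (F_k·ξ) a_k` for all `j, k`, then all `a_j` vanish. -/
theorem stmt5 {n J : ℕ} (F : Fin J → EuclideanSpace ℝ (Fin n)) (hF : ∀ j, F j ≠ 0)
    (hell : ∀ ξ : EuclideanSpace ℝ (Fin n), (∀ j, qForm (‖F j‖⁻¹ • F j) ξ = 0) → ξ = 0)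
    (ξ : EuclideanSpace ℝ (Fin n)) (hξ : ξ ≠ 0)
    (a : Fin J → ℂ)
    (h1 : ∀ j, ((qForm (‖F j‖⁻¹ • F j) ξ : ℝ) : ℂ) * a j = 0)
    (h2 : ∀ j k, ((‖F k‖ ^ 2 : ℝ) : ℂ) * ((inner ℝ (F j) ξ : ℝ) : ℂ) * a j
            = ((‖F j‖ ^ 2 : ℝ) : ℂ) * ((inner ℝ (F k) ξ : ℝ) : ℂ) * a k) :
    ∀ j, a j = 0 := by
  intro j
  by_cases hq : qForm (‖F j‖⁻¹ • F j) ξ = 0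
  · -- then inner (F j) ξ ≠ 0
    have hinner : (inner ℝ (F j) ξ : ℝ) ≠ 0 := by
      intro h0
      have : qForm (‖F j‖⁻¹ • F j) ξ = -‖ξ‖ ^ 2 := by
        simp [qForm, inner_smul_left, h0]
      rw [hq] at this
      have : ‖ξ‖ ^ 2 = 0 := by linarith
      exact hξ (by simpa using this)
    -- ellipticity: some k with qForm ≠ 0
    obtain ⟨k, hk⟩ : ∃ k, qForm (‖F k‖⁻¹ • F k) ξ ≠ 0 := by
      by_contra h
      push_neg at h
      exact hξ (hell ξ h)
    have hak : a k = 0 := by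
      have := h1 k
      have hk' : ((qForm (‖F k‖⁻¹ • F k) ξ : ℝ) : ℂ) ≠ 0 := by
        exact_mod_cast hk
      exact (mul_eq_zero.mp this).resolve_left hk'
    have := h2 j k
    rw [hak, mul_zero] at this
    have hFk : ((‖F k‖ ^ 2 : ℝ) : ℂ) ≠ 0 := by
      have h0 : ‖F k‖ ≠ 0 := norm_ne_zero_iff.mpr (hF k)
      exact_mod_cast pow_ne_zero 2 h0
    have hin : ((inner ℝ (F j) ξ : ℝ) : ℂ) ≠ 0 := by exact_mod_cast hinner
    rcases mul_eq_zero.mp this with h | h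
    · exact absurd (mul_eq_zero.mp h) (by tauto)
    · exact h
  · have := h1 j
    have hq' : ((qForm (‖F j‖⁻¹ • F j) ξ : ℝ) : ℂ) ≠ 0 := by exact_mod_cast hq
    exact (mul_eq_zero.mp this).resolve_left hq'
end

section
/- Let n ≥ 2 and let F̂₁, …, F̂_J and N be unit vectors in ℝⁿ such that the family {q_{F̂_j}} satisfies the UCP condition at N. Then for every nonzero ξ' ∈ ℝⁿ with ξ'·N = 0 there exists an index j with q_{F̂_j}(N) ≠ 0 such that the quadratic polynomial τ ↦ q_{F̂_j}(ξ' + τN) has two distinct complex roots. -/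
/-- For unit vectors `F, N`, the quadratic form
`q_{F;N}(ξ') = 2 (F·ξ')² − (1 − 2(F·N)²)|ξ'|²` on the hyperplane `ξ'·N = 0`. -/
noncomputable def qFormN {n : ℕ} (F N ξ' : EuclideanSpace ℝ (Fin n)) : ℝ :=
  2 * (inner ℝ F ξ' : ℝ) ^ 2 - (1 - 2 * (inner ℝ F N : ℝ) ^ 2) * ‖ξ'‖ ^ 2

/-- If the family `{q_{F̂_j}}` of unit vectors `F̂_j` in `ℝⁿ` (`n ≥ 2`) satisfies the UCP
condition at the unit vector `N`, then for every nonzero `ξ' ⊥ N` there is an index `j`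
with `q_{F̂_j}(N) ≠ 0` such that the quadratic `τ ↦ q_{F̂_j}(ξ' + τN)` has two distinct
complex roots. -/
theorem stmt7 {n J : ℕ} (hn : 2 ≤ n)
    (F : Fin J → EuclideanSpace ℝ (Fin n)) (hF : ∀ j, ‖F j‖ = 1)
    (N : EuclideanSpace ℝ (Fin n)) (hN : ‖N‖ = 1)
    (hUCP : ∀ ξ' : EuclideanSpace ℝ (Fin n), (inner ℝ ξ' N : ℝ) = 0 →
      (∀ j, qForm (F j) N ≠ 0 → qFormN (F j) N ξ' = 0) → ξ' = 0) :
    ∀ ξ' : EuclideanSpace ℝ (Fin n), ξ' ≠ 0 → (inner ℝ ξ' N : ℝ) = 0 →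
      ∃ j, qForm (F j) N ≠ 0 ∧
        ∃ z₁ z₂ : ℂ, z₁ ≠ z₂ ∧ ∀ τ : ℂ,
          ((2 * (inner ℝ (F j) N : ℝ) ^ 2 - 1 : ℝ) : ℂ) * τ ^ 2
              + ((4 * (inner ℝ (F j) N : ℝ) * (inner ℝ (F j) ξ' : ℝ) : ℝ) : ℂ) * τ
              + ((2 * (inner ℝ (F j) ξ' : ℝ) ^ 2 - ‖ξ'‖ ^ 2 : ℝ) : ℂ)
            = ((2 * (inner ℝ (F j) N : ℝ) ^ 2 - 1 : ℝ) : ℂ) * (τ - z₁) * (τ - z₂) := by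
  intro ξ' hξ hperp
  -- find j with qForm ≠ 0 and qFormN ≠ 0
  have hj : ∃ j, qForm (F j) N ≠ 0 ∧ qFormN (F j) N ξ' ≠ 0 := by
    by_contra h
    push_neg at h
    exact hξ (hUCP ξ' hperp (fun j hq => h j hq))
  obtain ⟨j, hq, hqN⟩ := hj
  refine ⟨j, hq, ?_⟩
  set α : ℝ := (inner ℝ (F j) N : ℝ) with hα
  set β : ℝ := (inner ℝ (F j) ξ' : ℝ) with hβ
  have ha0 : (2 * α ^ 2 - 1 : ℝ) ≠ 0 := by
    have : qForm (F j) N = 2 * α ^ 2 - 1 := by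
      simp [qForm, hN, hα]
    rwa [this] at hq
  set a : ℂ := ((2 * α ^ 2 - 1 : ℝ) : ℂ) with haC
  set b : ℂ := ((4 * α * β : ℝ) : ℂ) with hbC
  set c : ℂ := ((2 * β ^ 2 - ‖ξ'‖ ^ 2 : ℝ) : ℂ) with hcC
  have haC0 : a ≠ 0 := Complex.ofReal_ne_zero.mpr ha0
  -- discriminant
  have hD : b ^ 2 - 4 * a * c = ((4 * qFormN (F j) N ξ' : ℝ) : ℂ) := by
    rw [haC, hbC, hcC]
    push_cast
    simp only [qFormN, ← hα, ← hβ]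
    push_cast
    ring
  have hD0 : b ^ 2 - 4 * a * c ≠ 0 := by
    rw [hD]
    exact_mod_cast mul_ne_zero (by norm_num) hqN
  obtain ⟨s, hs⟩ : ∃ s : ℂ, s ^ 2 = b ^ 2 - 4 * a * c :=
    IsAlgClosed.exists_pow_nat_eq _ zero_lt_two
  have hs0 : s ≠ 0 := by
    intro h
    rw [h] at hs
    exact hD0 (by simpa using hs.symm)
  refine ⟨(-b + s) / (2 * a), (-b - s) / (2 * a), ?_, ?_⟩
  · intro h
    field_simp at h
    exact hs0 (by linear_combination h / 2)
  · intro τ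
    field_simp
    ring_nf
    linear_combination hs
end

section
/- Let F̂₁, …, F̂_J be unit vectors in ℝ². Then the family {q_{F̂_j}} is elliptic if and only if it satisfies the UCP condition at every unit vector N ∈ ℝ². -/
private lemma inner2 (x y : EuclideanSpace ℝ (Fin 2)) :
    (inner ℝ x y : ℝ) = x 0 * y 0 + x 1 * y 1 := by
  simp [PiLp.inner_apply, Fin.sum_univ_two]; ring

private lemma normsq2 (x : EuclideanSpace ℝ (Fin 2)) : ‖x‖ ^ 2 = x 0 ^ 2 + x 1 ^ 2 := by
  rw [EuclideanSpace.norm_eq, Real.sq_sqrt (by positivity)]; simp [Fin.sum_univ_two]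

/-- Key identity in dimension 2: for unit `F, N` and `ξ' ⊥ N`, `q_{F;N}(ξ') = ‖ξ'‖²`. -/
private lemma qFormN_eq (F N ξ' : EuclideanSpace ℝ (Fin 2)) (hF : ‖F‖ = 1) (hN : ‖N‖ = 1)
    (hperp : (inner ℝ ξ' N : ℝ) = 0) : qFormN F N ξ' = ‖ξ'‖ ^ 2 := by
  have h1 : F 0 ^ 2 + F 1 ^ 2 = 1 := by rw [← normsq2, hF]; norm_num
  have h2 : N 0 ^ 2 + N 1 ^ 2 = 1 := by rw [← normsq2, hN]; norm_num
  have h3 : ξ' 0 * N 0 + ξ' 1 * N 1 = 0 := by rw [← inner2]; exact hperp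
  set t : ℝ := N 0 * ξ' 1 - N 1 * ξ' 0 with ht
  have hx : ξ' 0 = -N 1 * t := by rw [ht]; linear_combination N 0 * h3 - ξ' 0 * h2
  have hy : ξ' 1 = N 0 * t := by rw [ht]; linear_combination N 1 * h3 - ξ' 1 * h2
  rw [qFormN, inner2, inner2, normsq2, hx, hy]
  linear_combination (2 * t ^ 2 * (N 0 ^ 2 + N 1 ^ 2)) * h1 +
    (2 * t ^ 2 * (F 0 * N 0 + F 1 * N 1) ^ 2) * h2

private lemma qForm_smul (F ξ : EuclideanSpace ℝ (Fin 2)) (c : ℝ) :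
    qForm F (c • ξ) = c ^ 2 * qForm F ξ := by
  simp [qForm, inner_smul_right, norm_smul, mul_pow, sq_abs]; ring

/-- In dimension `2`, a family `{q_{F̂_j}}` of quadratic forms associated to unit vectors
is elliptic if and only if it satisfies the UCP condition at every unit vector `N`. -/
theorem stmt8 {J : ℕ} (F : Fin J → EuclideanSpace ℝ (Fin 2)) (hF : ∀ j, ‖F j‖ = 1) :
    (∀ ξ : EuclideanSpace ℝ (Fin 2), (∀ j, qForm (F j) ξ = 0) → ξ = 0) ↔
      (∀ N : EuclideanSpace ℝ (Fin 2), ‖N‖ = 1 →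
        ∀ ξ' : EuclideanSpace ℝ (Fin 2), (inner ℝ ξ' N : ℝ) = 0 →
          (∀ j, qForm (F j) N ≠ 0 → qFormN (F j) N ξ' = 0) → ξ' = 0) := by
  constructor
  · intro hell N hN ξ' hperp h
    obtain ⟨j, hj⟩ : ∃ j, qForm (F j) N ≠ 0 := by
      by_contra hc
      push_neg at hc
      have hN0 := hell N hc
      rw [hN0] at hN
      simp at hN
    have hq := h j hj
    rw [qFormN_eq (F j) N ξ' (hF j) hN hperp] at hq
    have : ‖ξ'‖ = 0 := by
      have := sq_eq_zero_iff.mp hq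
      exact this
    exact norm_eq_zero.mp this
  · intro hucp ξ hq
    by_contra hne
    have hξ : ‖ξ‖ ≠ 0 := norm_ne_zero_iff.mpr hne
    set N : EuclideanSpace ℝ (Fin 2) := ‖ξ‖⁻¹ • ξ with hNdef
    have hNnorm : ‖N‖ = 1 := by
      rw [hNdef, norm_smul]
      simp [abs_of_nonneg (inv_nonneg.mpr (norm_nonneg ξ)), inv_mul_cancel₀ hξ]
    have hqN : ∀ j, qForm (F j) N = 0 := by
      intro j
      rw [hNdef, qForm_smul, hq j, mul_zero]
    set ξ' : EuclideanSpace ℝ (Fin 2) := (WithLp.equiv 2 (Fin 2 → ℝ)).symm ![-N 1, N 0]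
      with hξ'def
    have hξ'0 : ξ' 0 = -N 1 := by rw [hξ'def]; simp
    have hξ'1 : ξ' 1 = N 0 := by rw [hξ'def]; simp
    have hperp : (inner ℝ ξ' N : ℝ) = 0 := by
      rw [inner2, hξ'0, hξ'1]; ring
    have h0 := hucp N hNnorm ξ' hperp (fun j hj => absurd (hqN j) hj)
    have hN2 : ‖N‖ ^ 2 = 0 := by
      rw [normsq2]
      have e0 : ξ' 0 = 0 := by rw [h0]; rfl
      have e1 : ξ' 1 = 0 := by rw [h0]; rfl
      rw [hξ'0] at e0; rw [hξ'1] at e1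
      rw [e1]
      have : N 1 = 0 := by linarith [neg_eq_zero.mp e0]
      rw [this]; ring
    rw [hNnorm] at hN2
    norm_num at hN2
end

section
/- Let F̂₁, …, F̂_J be unit vectors in ℝ³ such that the family {q_{F̂_j}} is elliptic, and let N be a unit vector in ℝ³ with q_{F̂_j}(N) ≠ 0 for every j. Then the family {q_{F̂_j}} satisfies the UCP condition at N: every ξ' ∈ ℝ³ with ξ'·N = 0 and q_{F̂_j;N}(ξ') = 0 for all j must be ξ' = 0. -/
/-- In dimension `3`, if the family `{q_{F̂_j}}` associated to unit vectors `F̂_j` is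
elliptic and `N` is a unit vector that is non-characteristic for every `q_{F̂_j}`, then
the family satisfies the UCP condition at `N`. -/
theorem stmt9 {J : ℕ} (F : Fin J → EuclideanSpace ℝ (Fin 3)) (hF : ∀ j, ‖F j‖ = 1)
    (hell : ∀ ξ : EuclideanSpace ℝ (Fin 3), (∀ j, qForm (F j) ξ = 0) → ξ = 0)
    (N : EuclideanSpace ℝ (Fin 3)) (hN : ‖N‖ = 1) (hnc : ∀ j, qForm (F j) N ≠ 0) :
    ∀ ξ' : EuclideanSpace ℝ (Fin 3), (inner ℝ ξ' N : ℝ) = 0 →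
      (∀ j, qFormN (F j) N ξ' = 0) → ξ' = 0 := by
  intro ξ' hperp hq
  set m : EuclideanSpace ℝ (Fin 3) := (WithLp.equiv 2 (Fin 3 → ℝ)).symm
    ![N 1 * ξ' 2 - N 2 * ξ' 1, N 2 * ξ' 0 - N 0 * ξ' 2, N 0 * ξ' 1 - N 1 * ξ' 0] with hm
  have hNsq : (inner ℝ N N : ℝ) = 1 := by
    rw [real_inner_self_eq_norm_sq, hN]; norm_num
  have hperp' : (inner ℝ ξ' N : ℝ) = 0 := hperp
  have hminner : ∀ x : EuclideanSpace ℝ (Fin 3), (inner ℝ x m : ℝ) =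
      x 0 * (N 1 * ξ' 2 - N 2 * ξ' 1) + x 1 * (N 2 * ξ' 0 - N 0 * ξ' 2)
        + x 2 * (N 0 * ξ' 1 - N 1 * ξ' 0) := by
    intro x
    simp only [hm, PiLp.inner_apply, RCLike.inner_apply, conj_trivial, Fin.sum_univ_three,
      WithLp.equiv_symm_apply, PiLp.toLp_apply, Matrix.cons_val_zero, Matrix.cons_val_one, Matrix.head_cons,
      Matrix.cons_val_two, Matrix.tail_cons]
    ring
  have hmzero : m = 0 := by
    apply hell
    intro j
    have hqj := hq j
    have hFj : (inner ℝ (F j) (F j) : ℝ) = 1 := by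
      rw [real_inner_self_eq_norm_sq, hF j]; norm_num
    rw [qFormN] at hqj
    rw [qForm, ← real_inner_self_eq_norm_sq]
    rw [← real_inner_self_eq_norm_sq] at hqj
    rw [hminner (F j), hminner m]
    simp only [PiLp.inner_apply, RCLike.inner_apply, Fin.sum_univ_three, conj_trivial] at hqj hFj hNsq hperp' ⊢
    simp only [hm, WithLp.equiv_symm_apply, PiLp.toLp_apply, Matrix.cons_val_zero, Matrix.cons_val_one,
      Matrix.head_cons, Matrix.cons_val_two, Matrix.tail_cons]
    linear_combination (-1 : ℝ) * hqj
      + (2 * (N 0^2 + N 1^2 + N 2^2) * (ξ' 0^2 + ξ' 1^2 + ξ' 2^2)) * hFj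
      + ((ξ' 0^2 + ξ' 1^2 + ξ' 2^2)
          - 2 * (F j 0 * ξ' 0 + F j 1 * ξ' 1 + F j 2 * ξ' 2)^2) * hNsq
      + (4 * (F j 0 * N 0 + F j 1 * N 1 + F j 2 * N 2)
            * (F j 0 * ξ' 0 + F j 1 * ξ' 1 + F j 2 * ξ' 2)
          - (2 * (F j 0^2 + F j 1^2 + F j 2^2) - 1)
            * (ξ' 0 * N 0 + ξ' 1 * N 1 + ξ' 2 * N 2)) * hperp'
  have hnorm : ‖ξ'‖ ^ 2 = (inner ℝ m m : ℝ) := by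
    rw [← real_inner_self_eq_norm_sq, hminner m]
    simp only [hm, WithLp.equiv_symm_apply, PiLp.toLp_apply, Matrix.cons_val_zero, Matrix.cons_val_one,
      Matrix.head_cons, Matrix.cons_val_two, Matrix.tail_cons]
    simp only [PiLp.inner_apply, RCLike.inner_apply, Fin.sum_univ_three, conj_trivial] at hNsq hperp' ⊢
    linear_combination (-(ξ' 0^2 + ξ' 1^2 + ξ' 2^2)) * hNsq
      + (ξ' 0 * N 0 + ξ' 1 * N 1 + ξ' 2 * N 2) * hperp'
  rw [hmzero] at hnorm
  simp only [inner_zero_right] at hnorm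
  have : ‖ξ'‖ = 0 := by
    have := sq_eq_zero_iff.mp hnorm
    simpa using hnorm
  exact norm_eq_zero.mp (by nlinarith [norm_nonneg ξ', hnorm])
end

section
/- Let F₁ and F₂ be linearly independent vectors in ℝ³, set F₃ = F₁ + F₂, and write F̂_j = F_j/|F_j| for j = 1, 2, 3. Then for every unit vector G in the span of F₁ and F₂ there exist real numbers c₁, c₂, c₃ with c₁ + c₂ + c₃ = 1 such that q_G(ξ) = c₁ q_{F̂₁}(ξ) + c₂ q_{F̂₂}(ξ) + c₃ q_{F̂₃}(ξ) for all ξ ∈ ℝ³. -/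
/-- Let `F₁, F₂` be linearly independent vectors in `ℝ³` and `F₃ = F₁ + F₂`, with
normalizations `F̂ⱼ = Fⱼ/|Fⱼ|`.  Every quadratic form `q_G` for a unit vector `G` in the
span of `F₁, F₂` is a linear combination `c₁ q_{F̂₁} + c₂ q_{F̂₂} + c₃ q_{F̂₃}` with
`c₁ + c₂ + c₃ = 1`. -/
theorem stmt11 (F₁ F₂ : EuclideanSpace ℝ (Fin 3))
    (hind : LinearIndependent ℝ ![F₁, F₂]) :
    ∀ G : EuclideanSpace ℝ (Fin 3), ‖G‖ = 1 →
      G ∈ Submodule.span ℝ {F₁, F₂} →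
      ∃ c₁ c₂ c₃ : ℝ, c₁ + c₂ + c₃ = 1 ∧
        ∀ ξ : EuclideanSpace ℝ (Fin 3),
          qForm G ξ = c₁ * qForm (‖F₁‖⁻¹ • F₁) ξ + c₂ * qForm (‖F₂‖⁻¹ • F₂) ξ
            + c₃ * qForm (‖F₁ + F₂‖⁻¹ • (F₁ + F₂)) ξ := by
  have h2 : F₂ ≠ 0 := hind.ne_zero 1
  have hpair := (linearIndependent_fin2.mp hind).2
  simp only [Matrix.cons_val_one, Matrix.head_cons, Matrix.cons_val_zero] at hpair
  have h1 : F₁ ≠ 0 := by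
    intro h; exact hpair 0 (by simp [h])
  have h3 : F₁ + F₂ ≠ 0 := by
    intro h
    exact hpair (-1) (by rw [neg_smul, one_smul]; exact (neg_eq_of_add_eq_zero_left h).symm ▸ rfl)
  have n1 : ‖F₁‖ ≠ 0 := norm_ne_zero_iff.mpr h1
  have n2 : ‖F₂‖ ≠ 0 := norm_ne_zero_iff.mpr h2
  have n3 : ‖F₁ + F₂‖ ≠ 0 := norm_ne_zero_iff.mpr h3
  intro G hG hGspan
  obtain ⟨a, b, hab⟩ := Submodule.mem_span_pair.mp hGspan
  have hsum : (a^2 - a*b) * ‖F₁‖^2 + (b^2 - a*b) * ‖F₂‖^2 + a*b * ‖F₁ + F₂‖^2 = 1 := by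
    have hGG : (inner ℝ G G : ℝ) = 1 := by
      rw [real_inner_self_eq_norm_sq, hG]; norm_num
    rw [← hab] at hGG
    have e1 : ‖F₁‖^2 = (inner ℝ F₁ F₁ : ℝ) := (real_inner_self_eq_norm_sq F₁).symm
    have e2 : ‖F₂‖^2 = (inner ℝ F₂ F₂ : ℝ) := (real_inner_self_eq_norm_sq F₂).symm
    have e3 : ‖F₁ + F₂‖^2 = (inner ℝ F₁ F₁ : ℝ) + 2 * inner ℝ F₁ F₂ + inner ℝ F₂ F₂ := by
      rw [← real_inner_self_eq_norm_sq, inner_add_add_self, real_inner_comm F₂ F₁]; ring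
    rw [e1, e2, e3]
    simp only [inner_add_left, inner_add_right, real_inner_smul_left, real_inner_smul_right] at hGG
    linear_combination hGG + a * b * (real_inner_comm F₂ F₁)
  refine ⟨(a^2 - a*b) * ‖F₁‖^2, (b^2 - a*b) * ‖F₂‖^2, a*b * ‖F₁ + F₂‖^2, hsum, ?_⟩
  intro ξ
  have k1 : ‖F₁‖⁻¹ * ‖F₁‖ = 1 := inv_mul_cancel₀ n1
  have k2 : ‖F₂‖⁻¹ * ‖F₂‖ = 1 := inv_mul_cancel₀ n2
  have k3 : ‖F₁ + F₂‖⁻¹ * ‖F₁ + F₂‖ = 1 := inv_mul_cancel₀ n3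
  simp only [qForm, ← hab, inner_add_left, real_inner_smul_left]
  linear_combination ‖ξ‖^2 * hsum
    - 2*(a^2 - a*b)*(inner ℝ F₁ ξ : ℝ)^2*(‖F₁‖⁻¹*‖F₁‖ + 1) * k1
    - 2*(b^2 - a*b)*(inner ℝ F₂ ξ : ℝ)^2*(‖F₂‖⁻¹*‖F₂‖ + 1) * k2
    - 2*(a*b)*((inner ℝ F₁ ξ : ℝ) + (inner ℝ F₂ ξ : ℝ))^2*(‖F₁ + F₂‖⁻¹*‖F₁ + F₂‖ + 1) * k3
end

section
/- Let V be a two-dimensional linear subspace of ℝ³ and let N be a unit vector in ℝ³. Then there exist unit vectors Ĝ₁, Ĝ₂, Ĝ₃ in V such that the family {q_{Ĝ₁}, q_{Ĝ₂}, q_{Ĝ₃}} is elliptic and q_{Ĝ_j}(N) ≠ 0 for j = 1, 2, 3. -/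
open RealInnerProductSpace

/-- A quadratic polynomial with nonzero sum of constant and leading coefficient is nonzero. -/
lemma quadPoly_ne_zero (A B C : ℝ) (h : A + C ≠ 0) :
    (Polynomial.C A + Polynomial.C B * Polynomial.X + Polynomial.C C * Polynomial.X ^ 2) ≠ 0 := by
  intro h0
  have h1 : (Polynomial.C A + Polynomial.C B * Polynomial.X +
      Polynomial.C C * Polynomial.X ^ 2).coeff 0 = A := by simp
  have h2 : (Polynomial.C A + Polynomial.C B * Polynomial.X +
      Polynomial.C C * Polynomial.X ^ 2).coeff 2 = C := by
    simp [Polynomial.coeff_C]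
  rw [h0] at h1 h2
  simp at h1 h2
  exact h (by rw [← h1, ← h2]; ring)

/-- Key avoidance lemma: for any three pairs of reals, there is `t` such that the rational
circle parametrization at `t` avoids `2 (g·wⱼ)² = 1` for all three pairs. -/
lemma avoid (x₁ y₁ x₂ y₂ x₃ y₃ : ℝ) :
    ∃ t : ℝ, 2 * ((1 - t^2) * x₁ + 2*t*y₁)^2 ≠ (1 + t^2)^2 ∧
             2 * ((1 - t^2) * x₂ + 2*t*y₂)^2 ≠ (1 + t^2)^2 ∧
             2 * ((1 - t^2) * x₃ + 2*t*y₃)^2 ≠ (1 + t^2)^2 := by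
  set s := Real.sqrt 2 with hsdef
  have hs : s ^ 2 = 2 := Real.sq_sqrt (by norm_num)
  -- the six quadratic factors
  let q : ℝ → ℝ → ℝ → Polynomial ℝ := fun ε x y =>
    Polynomial.C (1 - ε * s * x) + Polynomial.C (-2 * ε * s * y) * Polynomial.X +
      Polynomial.C (1 + ε * s * x) * Polynomial.X ^ 2
  have hqne : ∀ (ε x y : ℝ), q ε x y ≠ 0 := fun ε x y =>
    quadPoly_ne_zero _ _ _ (by ring_nf; norm_num)
  have hqeval : ∀ (ε x y t : ℝ),
      (q ε x y).eval t = (1 + t^2) - ε * s * ((1 - t^2) * x + 2*t*y) := by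
    intro ε x y t
    simp only [q, Polynomial.eval_add, Polynomial.eval_mul, Polynomial.eval_C,
      Polynomial.eval_X, Polynomial.eval_pow]
    ring
  set P := (q 1 x₁ y₁) * (q (-1) x₁ y₁) * ((q 1 x₂ y₂) * (q (-1) x₂ y₂)) *
      ((q 1 x₃ y₃) * (q (-1) x₃ y₃)) with hPdef
  have hP : P ≠ 0 :=
    mul_ne_zero (mul_ne_zero (mul_ne_zero (hqne _ _ _) (hqne _ _ _))
      (mul_ne_zero (hqne _ _ _) (hqne _ _ _))) (mul_ne_zero (hqne _ _ _) (hqne _ _ _))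
  have hex : ∃ t : ℝ, P.eval t ≠ 0 := by
    by_contra hc
    push_neg at hc
    exact hP (Polynomial.zero_of_eval_zero P hc)
  obtain ⟨t, ht⟩ := hex
  have hPt : P.eval t =
      ((1 + t^2) - 1 * s * ((1 - t^2) * x₁ + 2*t*y₁)) *
      ((1 + t^2) - (-1) * s * ((1 - t^2) * x₁ + 2*t*y₁)) *
      (((1 + t^2) - 1 * s * ((1 - t^2) * x₂ + 2*t*y₂)) *
       ((1 + t^2) - (-1) * s * ((1 - t^2) * x₂ + 2*t*y₂))) *
      (((1 + t^2) - 1 * s * ((1 - t^2) * x₃ + 2*t*y₃)) *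
       ((1 + t^2) - (-1) * s * ((1 - t^2) * x₃ + 2*t*y₃))) := by
    simp only [hPdef, Polynomial.eval_mul, hqeval]
  refine ⟨t, ?_, ?_, ?_⟩
  · intro heq
    apply ht
    rw [hPt]
    have hf : ((1 + t^2) - 1 * s * ((1 - t^2) * x₁ + 2*t*y₁)) *
        ((1 + t^2) - (-1) * s * ((1 - t^2) * x₁ + 2*t*y₁)) = 0 := by
      linear_combination (-(((1 - t^2) * x₁ + 2*t*y₁)^2)) * hs - heq
    rw [hf, zero_mul, zero_mul]
  · intro heq
    apply ht
    rw [hPt]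
    have hf : ((1 + t^2) - 1 * s * ((1 - t^2) * x₂ + 2*t*y₂)) *
        ((1 + t^2) - (-1) * s * ((1 - t^2) * x₂ + 2*t*y₂)) = 0 := by
      linear_combination (-(((1 - t^2) * x₂ + 2*t*y₂)^2)) * hs - heq
    rw [hf, mul_zero, zero_mul]
  · intro heq
    apply ht
    rw [hPt]
    have hf : ((1 + t^2) - 1 * s * ((1 - t^2) * x₃ + 2*t*y₃)) *
        ((1 + t^2) - (-1) * s * ((1 - t^2) * x₃ + 2*t*y₃)) = 0 := by
      linear_combination (-(((1 - t^2) * x₃ + 2*t*y₃)^2)) * hs - heq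
    rw [hf, mul_zero]


/-- Any 2-dimensional subspace of Euclidean 3-space contains an orthonormal pair. -/
lemma exists_orthonormal_pair (V : Submodule ℝ (EuclideanSpace ℝ (Fin 3)))
    (hV : Module.finrank ℝ V = 2) :
    ∃ e f : EuclideanSpace ℝ (Fin 3), e ∈ V ∧ f ∈ V ∧
      ⟪e, e⟫ = 1 ∧ ⟪f, f⟫ = 1 ∧ ⟪e, f⟫ = 0 := by
  classical
  let B := (stdOrthonormalBasis ℝ V).reindex (finCongr hV)
  refine ⟨(B 0 : V), (B 1 : V), (B 0).2, (B 1).2, ?_, ?_, ?_⟩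
  · rw [← Submodule.coe_inner]
    exact real_inner_self_eq_norm_sq (B 0) ▸ (by rw [B.orthonormal.1 0]; norm_num)
  · rw [← Submodule.coe_inner]
    exact real_inner_self_eq_norm_sq (B 1) ▸ (by rw [B.orthonormal.1 1]; norm_num)
  · rw [← Submodule.coe_inner]
    exact B.orthonormal.2 (by norm_num)

set_option maxHeartbeats 2000000 in
/-- Given a two-dimensional subspace `V` of `ℝ³` and a unit vector `N`, there exist three
unit vectors `Ĝ₁, Ĝ₂, Ĝ₃` in `V` such that `{q_{Ĝ₁}, q_{Ĝ₂}, q_{Ĝ₃}}` is an elliptic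
family and `q_{Ĝⱼ}(N) ≠ 0` for each `j`. -/
theorem stmt12 (V : Submodule ℝ (EuclideanSpace ℝ (Fin 3)))
    (hV : Module.finrank ℝ V = 2)
    (N : EuclideanSpace ℝ (Fin 3)) (hN : ‖N‖ = 1) :
    ∃ G₁ G₂ G₃ : EuclideanSpace ℝ (Fin 3),
      G₁ ∈ V ∧ G₂ ∈ V ∧ G₃ ∈ V ∧
      ‖G₁‖ = 1 ∧ ‖G₂‖ = 1 ∧ ‖G₃‖ = 1 ∧
      (∀ ξ : EuclideanSpace ℝ (Fin 3),
        qForm G₁ ξ = 0 → qForm G₂ ξ = 0 → qForm G₃ ξ = 0 → ξ = 0) ∧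
      qForm G₁ N ≠ 0 ∧ qForm G₂ N ≠ 0 ∧ qForm G₃ N ≠ 0 := by
  classical
  obtain ⟨e, f, heV, hfV, hee, hff, hef⟩ := exists_orthonormal_pair V hV
  -- fact ⟪f,e⟫ = 0
  have hfe : ⟪f, e⟫ = 0 := by rw [real_inner_comm]; exact hef
  -- inner of combinations
  have hinL : ∀ (α β : ℝ) (ξ : EuclideanSpace ℝ (Fin 3)),
      ⟪α • e + β • f, ξ⟫ = α * ⟪e, ξ⟫ + β * ⟪f, ξ⟫ := by
    intro α β ξ
    rw [inner_add_left, real_inner_smul_left, real_inner_smul_left]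
  -- norms of combinations
  have hnorm1 : ∀ (α β : ℝ), α ^ 2 + β ^ 2 = 1 → ‖α • e + β • f‖ = 1 := by
    intro α β h
    have h2 : ⟪α • e + β • f, α • e + β • f⟫ = 1 := by
      simp only [inner_add_left, inner_add_right, real_inner_smul_left,
        real_inner_smul_right, hee, hff, hef, hfe]
      nlinarith [h]
    rw [real_inner_self_eq_norm_sq] at h2
    nlinarith [norm_nonneg (α • e + β • f)]
  -- Bessel inequality for the pair e, f
  have bessel : ∀ ξ : EuclideanSpace ℝ (Fin 3), ⟪e, ξ⟫ ^ 2 + ⟪f, ξ⟫ ^ 2 ≤ ‖ξ‖ ^ 2 := by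
    intro ξ
    have h0 : (0 : ℝ) ≤ ⟪ξ - (⟪e, ξ⟫ • e + ⟪f, ξ⟫ • f), ξ - (⟪e, ξ⟫ • e + ⟪f, ξ⟫ • f)⟫ :=
      real_inner_self_nonneg
    have hce : ⟪ξ, e⟫ = ⟪e, ξ⟫ := real_inner_comm _ _
    have hcf : ⟪ξ, f⟫ = ⟪f, ξ⟫ := real_inner_comm _ _
    simp only [inner_sub_left, inner_sub_right, inner_add_left, inner_add_right,
      real_inner_smul_left, real_inner_smul_right, hee, hff, hef, hfe, hce, hcf] at h0
    nlinarith [h0, real_inner_self_eq_norm_sq ξ]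
  -- coordinates of N
  set x : ℝ := ⟪e, N⟫ with hxdef
  set y : ℝ := ⟪f, N⟫ with hydef
  set s3 : ℝ := Real.sqrt 3 with hs3def
  have hs3 : s3 ^ 2 = 3 := Real.sq_sqrt (by norm_num)
  obtain ⟨t, h1, h2, h3⟩ := avoid x y (x/2 + s3*y/2) (-(s3*x)/2 + y/2)
    (-x/2 + s3*y/2) (-(s3*x)/2 - y/2)
  have hdne : (1 + t ^ 2) ≠ 0 := by positivity
  set a : ℝ := (1 - t ^ 2) / (1 + t ^ 2) with hadef
  set b : ℝ := (2 * t) / (1 + t ^ 2) with hbdef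
  have hab : a ^ 2 + b ^ 2 = 1 := by
    rw [hadef, hbdef]
    field_simp
    ring
  have ha' : (1 - t ^ 2) = a * (1 + t ^ 2) := by rw [hadef]; field_simp
  have hb' : (2 * t) = b * (1 + t ^ 2) := by rw [hbdef]; field_simp
  -- the three unit vectors
  refine ⟨a • e + b • f, (a/2 - s3*b/2) • e + (s3*a/2 + b/2) • f,
      (-a/2 - s3*b/2) • e + (s3*a/2 - b/2) • f,
      V.add_mem (V.smul_mem _ heV) (V.smul_mem _ hfV),
      V.add_mem (V.smul_mem _ heV) (V.smul_mem _ hfV),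
      V.add_mem (V.smul_mem _ heV) (V.smul_mem _ hfV),
      hnorm1 _ _ hab,
      hnorm1 _ _ (by linear_combination ((a^2 + b^2)/4) * hs3 + hab),
      hnorm1 _ _ (by linear_combination ((a^2 + b^2)/4) * hs3 + hab),
      ?_, ?_, ?_, ?_⟩
  · -- ellipticity
    intro ξ hq1 hq2 hq3
    simp only [qForm] at hq1 hq2 hq3
    rw [hinL] at hq1 hq2 hq3
    set X : ℝ := ⟪e, ξ⟫ with hXdef
    set Y : ℝ := ⟪f, ξ⟫ with hYdef
    have hB := bessel ξ
    have key : (a*X + b*Y)^2 + ((a/2 - s3*b/2)*X + (s3*a/2 + b/2)*Y)^2 +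
        ((-a/2 - s3*b/2)*X + (s3*a/2 - b/2)*Y)^2 = (3/2) * (X^2 + Y^2) := by
      linear_combination ((a*Y - b*X)^2/2) * hs3 + ((3/2)*(X^2 + Y^2)) * hab
    have hXY : X^2 + Y^2 = ‖ξ‖^2 := by linarith [key, hq1, hq2, hq3, hB]
    have hprod : (a*X + b*Y) * ((-a/2 - s3*b/2)*X + (s3*a/2 - b/2)*Y) = -‖ξ‖^2/4 := by
      linear_combination (1/4)*hq2 - (1/4)*hq1 - (1/4)*hq3
    have hsq : ‖ξ‖^2 * ‖ξ‖^2 =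
        4*((a*X + b*Y) * ((-a/2 - s3*b/2)*X + (s3*a/2 - b/2)*Y))^2 := by
      linear_combination (-2*((-a/2 - s3*b/2)*X + (s3*a/2 - b/2)*Y)^2)*hq1 - (‖ξ‖^2)*hq3
    rw [hprod] at hsq
    have hn0 : ‖ξ‖^2 = 0 := by nlinarith [hsq, sq_nonneg (‖ξ‖^2)]
    have : ‖ξ‖ = 0 := by nlinarith [norm_nonneg ξ]
    exact norm_eq_zero.mp this
  · -- q G₁ N ≠ 0
    simp only [qForm]
    rw [hinL, hN]
    intro hcon
    apply h1
    have e1 : (1 - t^2)*x + 2*t*y = (a*x + b*y)*(1 + t^2) := by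
      rw [ha', hb']; ring
    calc 2*((1 - t^2)*x + 2*t*y)^2 = 2*(a*x + b*y)^2 * (1 + t^2)^2 := by rw [e1]; ring
      _ = 1 * (1 + t^2)^2 := by
          rw [show 2*(a*x + b*y)^2 = 1 by nlinarith [hcon]]
      _ = (1 + t^2)^2 := one_mul _
  · -- q G₂ N ≠ 0
    simp only [qForm]
    rw [hinL, hN]
    intro hcon
    apply h2
    have e1 : (1 - t^2)*(x/2 + s3*y/2) + 2*t*(-(s3*x)/2 + y/2) =
        ((a/2 - s3*b/2)*x + (s3*a/2 + b/2)*y)*(1 + t^2) := by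
      rw [ha', hb']; ring
    calc 2*((1 - t^2)*(x/2 + s3*y/2) + 2*t*(-(s3*x)/2 + y/2))^2
        = 2*((a/2 - s3*b/2)*x + (s3*a/2 + b/2)*y)^2 * (1 + t^2)^2 := by rw [e1]; ring
      _ = 1 * (1 + t^2)^2 := by
          rw [show 2*((a/2 - s3*b/2)*x + (s3*a/2 + b/2)*y)^2 = 1 by nlinarith [hcon]]
      _ = (1 + t^2)^2 := one_mul _
  · -- q G₃ N ≠ 0
    simp only [qForm]
    rw [hinL, hN]
    intro hcon
    apply h3
    have e1 : (1 - t^2)*(-x/2 + s3*y/2) + 2*t*(-(s3*x)/2 - y/2) =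
        ((-a/2 - s3*b/2)*x + (s3*a/2 - b/2)*y)*(1 + t^2) := by
      rw [ha', hb']; ring
    calc 2*((1 - t^2)*(-x/2 + s3*y/2) + 2*t*(-(s3*x)/2 - y/2))^2
        = 2*((-a/2 - s3*b/2)*x + (s3*a/2 - b/2)*y)^2 * (1 + t^2)^2 := by rw [e1]; ring
      _ = 1 * (1 + t^2)^2 := by
          rw [show 2*((-a/2 - s3*b/2)*x + (s3*a/2 - b/2)*y)^2 = 1 by nlinarith [hcon]]
      _ = (1 + t^2)^2 := one_mul _
end
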